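/- arXiv:1803.08906 — 2 statements merged into one kernel-verified Lean document; each statement's English description precedes it below -/
import Mathlib

section
/- Let Y be a very dense subset of a topological space X. Then the Krull dimension of Y (with the subspace topology) equals the Krull dimension of X. -/
/-!
If `Y` is very dense in `X`, every irreducible closed `F ⊆ X` is the closure of `F ∩ Y`, and
`F ∩ Y` is irreducible in `Y` because any two nonempty opens of `F` meet in a nonempty open of
`F`, which then meets `Y`. So `F ↦ F ∩ Y` is a strictly monotone map on irreducible closed sets,
giving `dim X ≤ dim Y`; the reverse inequality holds for every subspace.
-/

open AlgebraicGeometry CategoryTheory CategoryTheory.Limits Topology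

noncomputable section

namespace GOE

/-- A subset of a topological space is constructible if it is a finite union of
locally closed subsets. -/
def IsConstr {X : Type} [TopologicalSpace X] (C : Set X) : Prop :=
  ∃ (n : ℕ) (U Z : Fin n → Set X), (∀ i, IsOpen (U i)) ∧ (∀ i, IsClosed (Z i)) ∧
    C = ⋃ i, U i ∩ Z i

/-- The spectrum of the field `K`, as a scheme. -/
abbrev SpecK (K : Type) [Field K] : Scheme := Spec (CommRingCat.of K)

end GOE

open Set TopologicalSpace

section VeryDense

variable {X Y : Type*} [TopologicalSpace X] [TopologicalSpace Y]

def IsVeryDense (s : Set X) : Prop :=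
  ∀ F : Set X, IsClosed F → F ⊆ closure (F ∩ s)

theorem IsVeryDense.closure_inter_eq {s F : Set X} (hs : IsVeryDense s) (hF : IsClosed F) :
    closure (F ∩ s) = F :=
  (closure_minimal inter_subset_left hF).antisymm (hs F hF)

theorem IsVeryDense.inter_nonempty {s F : Set X} (hs : IsVeryDense s) (hF : IsClosed F)
    (hne : F.Nonempty) : (F ∩ s).Nonempty :=
  closure_nonempty_iff.mp (hne.mono (hs F hF))

theorem IsPreirreducible.preimage_of_isInducing {f : Y → X} {t : Set X} (hf : IsInducing f)
    (ht : IsPreirreducible t) (hdense : t ⊆ closure (t ∩ range f)) :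
    IsPreirreducible (f ⁻¹' t) := by
  intro u v hu hv ⟨x, hxt, hxu⟩ ⟨y, hyt, hyv⟩
  obtain ⟨U, hU, rfl⟩ := hf.isOpen_iff.mp hu
  obtain ⟨V, hV, rfl⟩ := hf.isOpen_iff.mp hv
  obtain ⟨z, hzt, hzUV⟩ := ht U V hU hV ⟨f x, hxt, hxu⟩ ⟨f y, hyt, hyv⟩
  obtain ⟨_, ⟨hwU, hwV⟩, hwt, w, rfl⟩ := mem_closure_iff.mp (hdense hzt) _ (hU.inter hV) hzUV
  exact ⟨w, hwt, hwU, hwV⟩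

theorem IsIrreducible.preimage_of_isVeryDense_range {f : Y → X} {t : Set X} (hf : IsInducing f)
    (hs : IsVeryDense (range f)) (ht : IsIrreducible t) (htc : IsClosed t) :
    IsIrreducible (f ⁻¹' t) := by
  obtain ⟨_, hx, y, rfl⟩ := hs.inter_nonempty htc ht.nonempty
  exact ⟨⟨y, hx⟩, ht.isPreirreducible.preimage_of_isInducing hf (hs t htc)⟩

namespace TopologicalSpace.IrreducibleCloseds

variable {f : Y → X} (hf : IsInducing f) (hs : IsVeryDense (range f))

def comap (F : IrreducibleCloseds X) : IrreducibleCloseds Y where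
  carrier := f ⁻¹' F
  isIrreducible' := F.isIrreducible.preimage_of_isVeryDense_range hf hs F.isClosed
  isClosed' := F.isClosed.preimage hf.continuous

theorem map_comap (F : IrreducibleCloseds X) : map f hf.continuous (comap hf hs F) = F := by
  ext1
  rw [coe_map, ← hs.closure_inter_eq F.isClosed, ← image_preimage_eq_inter_range]
  rfl

theorem comap_strictMono : StrictMono (comap hf hs) :=
  Monotone.strictMono_of_injective (fun _ _ h ↦ preimage_mono (f := f) h)
    (Function.LeftInverse.injective (map_comap hf hs))

end TopologicalSpace.IrreducibleCloseds

theorem Topology.IsInducing.topologicalKrullDim_eq_of_isVeryDense_range {f : Y → X}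
    (hf : IsInducing f) (hs : IsVeryDense (range f)) :
    topologicalKrullDim Y = topologicalKrullDim X :=
  hf.topologicalKrullDim_le.antisymm
    (Order.krullDim_le_of_strictMono _ (IrreducibleCloseds.comap_strictMono hf hs))

end VeryDense

namespace GOE

/-- Proposition 2.2. If `Y` is a very dense subset of a topological
space `X` (i.e. `F ∩ Y` is dense in `F` for every closed `F ⊆ X`), then the Krull
dimension of `Y` with the subspace topology equals the Krull dimension of `X`. -/
theorem topologicalKrullDim_eq_of_veryDense
    {X : Type} [TopologicalSpace X] (Y : Set X)
    (hY : ∀ F : Set X, IsClosed F → F ⊆ closure (F ∩ Y)) :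
    topologicalKrullDim Y = topologicalKrullDim X :=
  IsInducing.subtypeVal.topologicalKrullDim_eq_of_isVeryDense_range
    (by rwa [Subtype.range_coe])

end GOE
end
end

section
/- Let X be a Jacobson topological space and let C be a constructible subset of X. Then: (i) C (with the subspace topology) is Jacobson; (ii) the set C₀ of closed points of C equals C ∩ X₀, where X₀ is the set of closed points of X; (iii) the Krull dimensions satisfy dim(C) = dim(C₀) = dim(C ∩ X₀). -/
/-!
A nonempty locally closed subset of `C` is `C ∩ T` with `T` locally closed in `X`, hence a
nonempty constructible subset of `X`, and so it contains a point of `X₀`. This gives both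
`C₀ = C ∩ X₀` and the Jacobson property of `C`. A very dense subset `S` has the dimension of the
ambient space, because `F ↦ F ∩ S` is injective on closed sets (`F` is the closure of `F ∩ S`)
and preserves irreducibility; applied to `C₀ ⊆ C` this gives the dimension equalities.
-/

open AlgebraicGeometry CategoryTheory CategoryTheory.Limits Topology

noncomputable section

namespace GOE

open Set TopologicalSpace

section

variable {X Y : Type*} [TopologicalSpace X] [TopologicalSpace Y]

def IsVeryDense (S : Set X) : Prop :=
  ∀ F : Set X, IsClosed F → closure (F ∩ S) = F

lemma JacobsonSpace.isVeryDense_closedPoints [JacobsonSpace X] :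
    IsVeryDense (closedPoints X) :=
  fun _ hF ↦ closure_inter_closedPoints hF

lemma IsIrreducible.of_image_of_isInducing {f : X → Y} (hf : IsInducing f) {s : Set X}
    (h : IsIrreducible (f '' s)) : IsIrreducible s := by
  refine ⟨h.nonempty.of_image, ?_⟩
  intro u v hu hv ⟨x, hxs, hxu⟩ ⟨y, hys, hyv⟩
  obtain ⟨u', hu', rfl⟩ := hf.isOpen_iff.mp hu
  obtain ⟨v', hv', rfl⟩ := hf.isOpen_iff.mp hv
  obtain ⟨_, ⟨z, hzs, rfl⟩, hzu, hzv⟩ :=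
    h.isPreirreducible u' v' hu' hv' ⟨f x, mem_image_of_mem f hxs, hxu⟩
      ⟨f y, mem_image_of_mem f hys, hyv⟩
  exact ⟨z, hzs, hzu, hzv⟩

namespace IsVeryDense

variable {S : Set X} (hS : IsVeryDense S)
include hS

lemma isIrreducible_preimage_val (F : IrreducibleCloseds X) :
    IsIrreducible ((↑) ⁻¹' (F : Set X) : Set S) := by
  refine IsIrreducible.of_image_of_isInducing IsInducing.subtypeVal ?_
  rw [Subtype.image_preimage_coe, inter_comm, ← isIrreducible_iff_closure, hS _ F.isClosed]
  exact F.isIrreducible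

lemma preimage_val_injective :
    Function.Injective fun F : IrreducibleCloseds X ↦ ((↑) ⁻¹' (F : Set X) : Set S) := by
  intro F F' h
  have hinter : (F : Set X) ∩ S = (F' : Set X) ∩ S := by
    rw [inter_comm, inter_comm _ S]
    exact Subtype.preimage_coe_eq_preimage_coe_iff.mp h
  ext1
  rw [← hS _ F.isClosed, ← hS _ F'.isClosed, hinter]

lemma topologicalKrullDim_eq : topologicalKrullDim S = topologicalKrullDim X := by
  refine (topologicalKrullDim_subspace_le X S).antisymm <|
    Order.krullDim_le_of_strictMono
      (fun F : IrreducibleCloseds X ↦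
        ⟨(↑) ⁻¹' (F : Set X), hS.isIrreducible_preimage_val F,
          F.isClosed.preimage continuous_subtype_val⟩) ?_
  exact Monotone.strictMono_of_injective (fun _ _ h ↦ preimage_mono (f := ((↑) : S → X)) h)
    fun _ _ h ↦ hS.preimage_val_injective congr(($h : Set S))

end IsVeryDense

lemma topologicalKrullDim_preimage_val (C T : Set X) :
    topologicalKrullDim ((↑) ⁻¹' T : Set C) = topologicalKrullDim (C ∩ T : Set X) := by
  have hemb : IsEmbedding fun p : ((↑) ⁻¹' T : Set C) ↦ (p : X) :=
    IsEmbedding.subtypeVal.comp IsEmbedding.subtypeVal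
  have hrange : range (fun p : ((↑) ⁻¹' T : Set C) ↦ (p : X)) = C ∩ T := by
    change range (Subtype.val ∘ Subtype.val) = C ∩ T
    rw [range_comp, Subtype.range_coe, Subtype.image_preimage_coe]
  exact (hemb.toHomeomorph.trans (Homeomorph.setCongr hrange)).isHomeomorph.topologicalKrullDim_eq

end

namespace IsConstr

variable {X : Type} [TopologicalSpace X] {C : Set X}

lemma inter_isLocallyClosed (hC : IsConstr C) {T : Set X} (hT : IsLocallyClosed T) :
    IsConstr (C ∩ T) := by
  obtain ⟨n, U, Z, hU, hZ, rfl⟩ := hC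
  obtain ⟨O, F, hO, hF, rfl⟩ := hT
  refine ⟨n, fun i ↦ U i ∩ O, fun i ↦ Z i ∩ F, fun i ↦ (hU i).inter hO,
    fun i ↦ (hZ i).inter hF, ?_⟩
  rw [iUnion_inter]
  exact iUnion_congr fun i ↦ inter_inter_inter_comm _ _ _ _

variable [JacobsonSpace X]

lemma nonempty_inter_closedPoints (hC : IsConstr C) (hne : C.Nonempty) :
    (C ∩ closedPoints X).Nonempty := by
  obtain ⟨n, U, Z, hU, hZ, rfl⟩ := hC
  obtain ⟨i, hi⟩ := nonempty_iUnion.mp hne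
  obtain ⟨x, hx, hx₀⟩ := _root_.nonempty_inter_closedPoints hi ⟨U i, Z i, hU i, hZ i, rfl⟩
  exact ⟨x, mem_iUnion.mpr ⟨i, hx⟩, hx₀⟩

lemma nonempty_inter_preimage_closedPoints (hC : IsConstr C) {Z : Set C} (hZ : Z.Nonempty)
    (hZ' : IsLocallyClosed Z) : (Z ∩ (↑) ⁻¹' closedPoints X).Nonempty := by
  obtain ⟨T, hT, rfl⟩ := IsInducing.subtypeVal.isLocallyClosed_iff.mp hZ'
  obtain ⟨z, hz⟩ := hZ
  obtain ⟨x, ⟨hxC, hxT⟩, hx₀⟩ := (hC.inter_isLocallyClosed hT).nonempty_inter_closedPoints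
    ⟨z, z.2, hz⟩
  exact ⟨⟨x, hxC⟩, hxT, hx₀⟩

lemma closedPoints_eq_preimage (hC : IsConstr C) :
    closedPoints C = (↑) ⁻¹' closedPoints X := by
  refine subset_antisymm (fun x hx ↦ ?_)
    (preimage_closedPoints_subset Subtype.val_injective continuous_subtype_val)
  obtain ⟨_, rfl, hx₀⟩ :=
    hC.nonempty_inter_preimage_closedPoints (singleton_nonempty x) hx.isLocallyClosed
  exact hx₀

lemma jacobsonSpace (hC : IsConstr C) : JacobsonSpace C := by
  rw [jacobsonSpace_iff_locallyClosed, hC.closedPoints_eq_preimage]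
  exact fun _ ↦ hC.nonempty_inter_preimage_closedPoints

end IsConstr

/-- Proposition 2.4. Let `X` be a Jacobson topological space and `C`
a constructible subset of `X`. Then (i) `C` is Jacobson; (ii) the closed points of `C`
are exactly `C ∩ X₀`; (iii) `dim C = dim C₀ = dim (C ∩ X₀)`. -/
theorem jacobson_constructible
    {X : Type} [TopologicalSpace X] [JacobsonSpace X]
    (C : Set X) (hC : IsConstr C) :
    JacobsonSpace C ∧
    (Subtype.val '' closedPoints ↥C = C ∩ closedPoints X) ∧
    topologicalKrullDim ↥C = topologicalKrullDim ↥(closedPoints ↥C) ∧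
    topologicalKrullDim ↥C = topologicalKrullDim ↥(C ∩ closedPoints X) := by
  have := hC.jacobsonSpace
  have hdim : topologicalKrullDim C = topologicalKrullDim (closedPoints C) :=
    JacobsonSpace.isVeryDense_closedPoints.topologicalKrullDim_eq.symm
  refine ⟨this, by rw [hC.closedPoints_eq_preimage, Subtype.image_preimage_coe], hdim, ?_⟩
  rw [hdim, hC.closedPoints_eq_preimage, topologicalKrullDim_preimage_val]

end GOE
end
end
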